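/- Let α* be a curve in Minkowski 3-space E₁³ with Frenet frame (T*, N*, B*) and let α(s*) = α*(s*) + λ(s*)B*(s*) be a curve whose principal normal N at each point is parallel to B* at the corresponding point (a Mannheim pair). Then λ is constant, i.e., dλ/ds* = 0. -/

import Mathlib

/-!
Pair `α' = (α*)' + λ' B* + λ (B*)'` with `B*`: the terms `T*` and `(B*)' = τ* N*` are orthogonal
to `B*`, and so is `α' ∥ T`, because `T ⊥ N ∥ B*`. What is left is `λ' ⟨B*, B*⟩ = 0`, and `B*`
is non-null.
-/

noncomputable section

/-- Minkowski metric on `E₁³ = ℝ × ℝ × ℝ`: `⟨x,y⟩ = -x₁y₁ + x₂y₂ + x₃y₃`. -/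
def mink (x y : ℝ × ℝ × ℝ) : ℝ :=
  -(x.1 * y.1) + x.2.1 * y.2.1 + x.2.2 * y.2.2

lemma mink_comm (x y : ℝ × ℝ × ℝ) : mink x y = mink y x := by
  simp only [mink]; ring

lemma mink_add_left (x y z : ℝ × ℝ × ℝ) : mink (x + y) z = mink x z + mink y z := by
  simp only [mink, Prod.fst_add, Prod.snd_add]; ring

lemma mink_smul_left (c : ℝ) (x y : ℝ × ℝ × ℝ) : mink (c • x) y = c * mink x y := by
  simp only [mink, Prod.smul_fst, Prod.smul_snd, smul_eq_mul]; ring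

lemma mink_smul_right (c : ℝ) (x y : ℝ × ℝ × ℝ) : mink x (c • y) = c * mink x y := by
  rw [mink_comm, mink_smul_left, mink_comm]

lemma mink_eq_zero_of_eq_smul_right {x y z : ℝ × ℝ × ℝ} {c : ℝ} (hc : c ≠ 0) (hz : z = c • y)
    (hxz : mink x z = 0) : mink x y = 0 := by
  rw [hz, mink_smul_right] at hxz
  exact (mul_eq_zero.mp hxz).resolve_left hc

lemma mink_deriv_add_smul_self {β B : ℝ → ℝ × ℝ × ℝ} {lam : ℝ → ℝ} {s l : ℝ}
    {β' B' : ℝ × ℝ × ℝ} (hβ : HasDerivAt β β' s) (hB : HasDerivAt B B' s)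
    (hlam : HasDerivAt lam l s) (hβB : mink β' (B s) = 0) (hB'B : mink B' (B s) = 0) :
    mink (deriv (fun t => β t + lam t • B t) s) (B s) = l * mink (B s) (B s) := by
  rw [(hβ.fun_add (hlam.fun_smul hB)).deriv]
  simp only [mink_add_left, mink_smul_left, hβB, hB'B]
  ring

theorem mannheim_lambda_constant_general
    (αst Tst Nst Bst : ℝ → ℝ × ℝ × ℝ) (τst lam : ℝ → ℝ)
    (α T N : ℝ → ℝ × ℝ × ℝ) (f : ℝ → ℝ)
    -- differentiability
    (hαst_diff : Differentiable ℝ αst)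
    (hBst_diff : Differentiable ℝ Bst)
    (hlam_diff : Differentiable ℝ lam)
    -- α* is unit speed with tangent T*
    (hTst : ∀ s, deriv αst s = Tst s)
    -- Frenet equation for the binormal of α*
    (hFrenetB : ∀ s, deriv Bst s = τst s • Nst s)
    -- orthogonality of the frame of α*, and B* is non-null
    (hTB : ∀ s, mink (Tst s) (Bst s) = 0)
    (hNB : ∀ s, mink (Nst s) (Bst s) = 0)
    (hBB : ∀ s, mink (Bst s) (Bst s) ≠ 0)
    -- the Mannheim partner curve α
    (hα : ∀ s, α s = αst s + lam s • Bst s)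
    -- T is the (non-null) tangent direction of α
    (hT : ∀ s, deriv α s = f s • T s)
    -- N is the principal normal of α, orthogonal to T
    (hTN : ∀ s, mink (T s) (N s) = 0)
    -- the principal normal of α is parallel to the binormal of α*
    (hpar : ∀ s, ∃ c : ℝ, c ≠ 0 ∧ N s = c • Bst s) :
    ∀ s, deriv lam s = 0 := by
  intro s
  have hαst : HasDerivAt αst (Tst s) s := hTst s ▸ (hαst_diff s).hasDerivAt
  have hBst : HasDerivAt Bst (τst s • Nst s) s := hFrenetB s ▸ (hBst_diff s).hasDerivAt
  have hTBst : mink (T s) (Bst s) = 0 := by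
    obtain ⟨c, hc, hN⟩ := hpar s
    exact mink_eq_zero_of_eq_smul_right hc hN (hTN s)
  have key := mink_deriv_add_smul_self hαst hBst (hlam_diff s).hasDerivAt (hTB s)
    (by rw [mink_smul_left, hNB, mul_zero])
  rw [← funext hα, hT, mink_smul_left, hTBst, mul_zero] at key
  exact (mul_eq_zero.mp key.symm).resolve_right (hBB s)

/-- Let `α*` (written `αst`) be a unit-speed curve in `E₁³` with Frenet frame
`(Tst, Nst, Bst)` satisfying `(B*)' = τ* N*`, and let `α(s*) = α*(s*) + λ(s*) B*(s*)` be a curve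
whose principal normal `N` at each point is parallel to `B*` (Mannheim pair).
Then `λ` is constant, i.e. `dλ/ds* = 0`. -/
theorem mannheim_lambda_constant
    (αst Tst Nst Bst : ℝ → ℝ × ℝ × ℝ) (τst lam : ℝ → ℝ)
    (α T N : ℝ → ℝ × ℝ × ℝ) (f : ℝ → ℝ)
    -- differentiability
    (hαst_diff : Differentiable ℝ αst)
    (hBst_diff : Differentiable ℝ Bst)
    (hlam_diff : Differentiable ℝ lam)
    -- α* is unit speed with tangent T*
    (hTst : ∀ s, deriv αst s = Tst s)
    -- Frenet equation for the binormal of α*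
    (hFrenetB : ∀ s, deriv Bst s = τst s • Nst s)
    -- orthogonality of the frame of α*, and B* is non-null
    (hTB : ∀ s, mink (Tst s) (Bst s) = 0)
    (hNB : ∀ s, mink (Nst s) (Bst s) = 0)
    (hBB : ∀ s, mink (Bst s) (Bst s) ≠ 0)
    -- the Mannheim partner curve α
    (hα : ∀ s, α s = αst s + lam s • Bst s)
    -- T is the (non-null) tangent direction of α
    (hT : ∀ s, deriv α s = f s • T s)
    (hf : ∀ s, f s ≠ 0)
    -- N is the principal normal of α, orthogonal to T
    (hTN : ∀ s, mink (T s) (N s) = 0)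
    -- the principal normal of α is parallel to the binormal of α*
    (hpar : ∀ s, ∃ c : ℝ, c ≠ 0 ∧ N s = c • Bst s) :
    ∀ s, deriv lam s = 0 :=
  mannheim_lambda_constant_general αst Tst Nst Bst τst lam α T N f hαst_diff hBst_diff hlam_diff
    hTst hFrenetB hTB hNB hBB hα hT hTN hpar
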